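/- Let n ≥ k ≥ 1, let X be a random vector in ℝ^k with density proportional to (1 − ‖x‖²)_+^((n−k)/2 − 1), and let a_n be an independent chi-distributed random variable with n degrees of freedom. Then the product a_n · X is distributed as a standard Gaussian vector in ℝ^k (identity covariance). -/

import Mathlib

/-!
Conditioning on `aₙ = a`, the vector `a • X` has density `a⁻ᵏ f_X(z / a)`, so `aₙ • X` has density
`z ↦ ∫ f_a(a) a⁻ᵏ f_X(z / a) da`. For `r = ‖z‖` the integrand is a multiple of
`a (a² - r²)₊^((n-k)/2 - 1) e^(-a²/2)`, and the substitution `t = (a² - r²)/2` pulls out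
`e^(-r²/2)`, leaving a constant that does not depend on `z`. Hence `aₙ • X` is a multiple of the
Gaussian measure; being a probability measure, it is the standard Gaussian, so the constant never
has to be computed.
-/

open MeasureTheory Real

/-- The standard Gaussian measure on `ℝ^k` (identity covariance), given by its density. -/
noncomputable def stdGaussian (k : ℕ) : Measure (EuclideanSpace ℝ (Fin k)) :=
  volume.withDensity fun z =>
    ENNReal.ofReal ((2 * Real.pi) ^ (-(k : ℝ) / 2) * Real.exp (-‖z‖ ^ 2 / 2))

/-- Measure on `ℝ` with density proportional to the chi density with `n` degrees of
freedom, `t^(n-1) exp(-t²/2)` on `(0,∞)`. -/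
noncomputable def chiMeasure (n : ℕ) (c : ℝ) : Measure ℝ :=
  volume.withDensity fun t =>
    ENNReal.ofReal (c * if 0 < t then t ^ ((n : ℝ) - 1) * Real.exp (-t ^ 2 / 2) else 0)

/-- Measure on `ℝ^k` with density proportional to the Tsallis power-law density
`(1 - ‖x‖²)₊^((n-k)/2 - 1)`. -/
noncomputable def tsallisMeasure (n k : ℕ) (c : ℝ) : Measure (EuclideanSpace ℝ (Fin k)) :=
  volume.withDensity fun x =>
    ENNReal.ofReal (c * (max 0 (1 - ‖x‖ ^ 2)) ^ (((n : ℝ) - k) / 2 - 1))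

open Set Module
open scoped ENNReal

section SmulProd

variable {E : Type*} [NormedAddCommGroup E] [NormedSpace ℝ E] [FiniteDimensional ℝ E]
  [MeasurableSpace E] [BorelSpace E] (μ : Measure E) [μ.IsAddHaarMeasure]

theorem withDensity_preimage_smul {g : E → ℝ≥0∞} (hg : Measurable g) {a : ℝ} (ha : a ≠ 0)
    {s : Set E} (hs : MeasurableSet s) :
    μ.withDensity g ((a • ·) ⁻¹' s) =
      ∫⁻ z in s, ENNReal.ofReal |(a ^ finrank ℝ E)⁻¹| * g (a⁻¹ • z) ∂μ := by
  have hpre : MeasurableSet ((a • ·) ⁻¹' s : Set E) := measurable_const_smul a hs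
  calc μ.withDensity g ((a • ·) ⁻¹' s)
      = ∫⁻ x in (a • ·) ⁻¹' s, g (a⁻¹ • a • x) ∂μ := by
        simp only [withDensity_apply _ hpre, inv_smul_smul₀ ha]
    _ = ∫⁻ z in s, g (a⁻¹ • z) ∂(μ.map (a • ·)) :=
        (setLIntegral_map hs (hg.comp (measurable_const_smul a⁻¹)) (measurable_const_smul a)).symm
    _ = _ := by
        rw [Measure.map_addHaar_smul μ ha, Measure.restrict_smul, lintegral_smul_measure,
          smul_eq_mul, ← lintegral_const_mul _ (by fun_prop)]

theorem map_smul_prod_withDensity {f : ℝ → ℝ≥0∞} {g : E → ℝ≥0∞} (hf : Measurable f)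
    (hg : Measurable g) :
    ((volume.withDensity f).prod (μ.withDensity g)).map (fun p => p.1 • p.2) =
      μ.withDensity fun z =>
        ∫⁻ a, f a * ENNReal.ofReal |(a ^ finrank ℝ E)⁻¹| * g (a⁻¹ • z) := by
  have hsmul : Measurable fun p : ℝ × E => p.1 • p.2 := measurable_fst.smul measurable_snd
  ext s hs
  rw [Measure.map_apply hsmul hs, Measure.prod_apply (hsmul hs),
    lintegral_withDensity_eq_lintegral_mul _ hf (measurable_measure_prodMk_left (hsmul hs)),
    withDensity_apply _ hs]
  calc ∫⁻ a, f a * μ.withDensity g ((a • ·) ⁻¹' s)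
      = ∫⁻ a, ∫⁻ z in s, f a * ENNReal.ofReal |(a ^ finrank ℝ E)⁻¹| * g (a⁻¹ • z) ∂μ := by
        refine lintegral_congr_ae ((Measure.ae_ne volume 0).mono fun a ha => ?_)
        simp only [withDensity_preimage_smul μ hg ha hs, mul_assoc]
        exact (lintegral_const_mul _ (by fun_prop)).symm
    _ = _ := lintegral_lintegral_swap (by fun_prop)

end SmulProd

theorem image_sq_sub_sq_div_two_Ioi {r : ℝ} (hr : 0 ≤ r) :
    (fun a : ℝ => (a ^ 2 - r ^ 2) / 2) '' Ioi r = Ioi 0 := by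
  ext t
  constructor
  · rintro ⟨a, ha : r < a, rfl⟩
    show 0 < (a ^ 2 - r ^ 2) / 2
    nlinarith
  · intro (ht : 0 < t)
    have hsq : 0 ≤ 2 * t + r ^ 2 := by positivity
    refine ⟨√(2 * t + r ^ 2), (lt_sqrt hr).2 (by linarith), ?_⟩
    simp only [sq_sqrt hsq]
    ring

theorem injOn_sq_sub_sq_div_two_Ioi {r : ℝ} (hr : 0 ≤ r) :
    InjOn (fun a : ℝ => (a ^ 2 - r ^ 2) / 2) (Ioi r) := by
  intro a (ha : r < a) b (hb : r < b) hab
  simp only at hab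
  nlinarith

-- the substitution `t = (a² - r²) / 2`; `e ≠ 0` makes the integrand vanish on `(0, r]`
theorem lintegral_Ioi_mul_max_sq_sub_sq_rpow_mul_exp {r e : ℝ} (hr : 0 ≤ r) (he : e ≠ 0) :
    ∫⁻ a in Ioi 0, ENNReal.ofReal (a * max 0 (a ^ 2 - r ^ 2) ^ e * rexp (-a ^ 2 / 2)) =
      ENNReal.ofReal (rexp (-r ^ 2 / 2)) *
        ∫⁻ t in Ioi 0, ENNReal.ofReal ((2 * t) ^ e * rexp (-t)) := by
  have h_small : ∫⁻ a in Ioc 0 r,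
      ENNReal.ofReal (a * max 0 (a ^ 2 - r ^ 2) ^ e * rexp (-a ^ 2 / 2)) = 0 := by
    refine setLIntegral_eq_zero measurableSet_Ioc fun a ha => ?_
    have : max 0 (a ^ 2 - r ^ 2) = 0 := max_eq_left (by nlinarith [ha.1, ha.2])
    simp [this, zero_rpow he]
  have h_split : ∫⁻ a in Ioi 0,
      ENNReal.ofReal (a * max 0 (a ^ 2 - r ^ 2) ^ e * rexp (-a ^ 2 / 2)) =
      ∫⁻ a in Ioi r, ENNReal.ofReal (a * max 0 (a ^ 2 - r ^ 2) ^ e * rexp (-a ^ 2 / 2)) := by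
    rw [← Ioc_union_Ioi_eq_Ioi hr, lintegral_union measurableSet_Ioi (Ioc_disjoint_Ioi le_rfl),
      h_small, zero_add]
  rw [h_split, ← lintegral_const_mul _ (by fun_prop), ← image_sq_sub_sq_div_two_Ioi hr,
    lintegral_image_eq_lintegral_abs_deriv_mul measurableSet_Ioi
      (fun a _ => ((((hasDerivAt_pow 2 a).sub_const (r ^ 2)).div_const 2).congr_deriv
        (by ring)).hasDerivWithinAt) (injOn_sq_sub_sq_div_two_Ioi hr)]
  refine setLIntegral_congr_fun measurableSet_Ioi fun a (ha : r < a) => ?_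
  have ha₀ : 0 < a := hr.trans_lt ha
  rw [abs_of_pos ha₀, max_eq_right (by nlinarith), ← ENNReal.ofReal_mul (by positivity),
    ← ENNReal.ofReal_mul ha₀.le]
  congr 1
  rw [show -(a ^ 2) / 2 = -(r ^ 2) / 2 + -((a ^ 2 - r ^ 2) / 2) by ring, exp_add]
  ring_nf

theorem rpow_sub_one_mul_inv_pow_mul_max_one_sub_sq_rpow {a : ℝ} (ha : 0 < a) (r m : ℝ)
    (k : ℕ) :
    a ^ (m - 1) * (a ^ k)⁻¹ * max 0 (1 - (a⁻¹ * r) ^ 2) ^ ((m - k) / 2 - 1) =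
      a * max 0 (a ^ 2 - r ^ 2) ^ ((m - k) / 2 - 1) := by
  have hmax : max 0 (1 - (a⁻¹ * r) ^ 2) = (a ^ 2)⁻¹ * max 0 (a ^ 2 - r ^ 2) := by
    rw [mul_max_of_nonneg _ _ (by positivity), mul_zero]
    field_simp
  rw [hmax, mul_rpow (by positivity) (le_max_left _ _), ← mul_assoc]
  congr 1
  rw [inv_rpow (by positivity), ← rpow_natCast a 2, ← rpow_mul ha.le, ← rpow_natCast a k,
    ← rpow_neg ha.le, ← rpow_neg ha.le, ← rpow_add ha, ← rpow_add ha]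
  convert rpow_one a using 2
  push_cast
  ring

theorem lintegral_chi_mul_tsallis_density {E : Type*} [NormedAddCommGroup E] [NormedSpace ℝ E]
    {n k : ℕ} (he : ((n : ℝ) - k) / 2 - 1 ≠ 0) {ca cX : ℝ} (hca : 0 ≤ ca) (hcX : 0 ≤ cX)
    (z : E) :
    ∫⁻ a, ENNReal.ofReal (ca * if 0 < a then a ^ ((n : ℝ) - 1) * rexp (-a ^ 2 / 2) else 0) *
        ENNReal.ofReal |(a ^ k)⁻¹| *
        ENNReal.ofReal (cX * max 0 (1 - ‖a⁻¹ • z‖ ^ 2) ^ (((n : ℝ) - k) / 2 - 1)) =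
      (ENNReal.ofReal (ca * cX) *
        ∫⁻ t in Ioi 0, ENNReal.ofReal ((2 * t) ^ (((n : ℝ) - k) / 2 - 1) * rexp (-t))) *
        ENNReal.ofReal (rexp (-‖z‖ ^ 2 / 2)) := by
  set e := ((n : ℝ) - k) / 2 - 1
  rw [← setLIntegral_eq_of_support_subset (s := Ioi 0)]
  · calc _ = ∫⁻ a in Ioi 0, ENNReal.ofReal (ca * cX) *
          ENNReal.ofReal (a * max 0 (a ^ 2 - ‖z‖ ^ 2) ^ e * rexp (-a ^ 2 / 2)) := by
          refine setLIntegral_congr_fun measurableSet_Ioi fun a (ha : 0 < a) => ?_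
          rw [if_pos ha, norm_smul, norm_inv, norm_of_nonneg ha.le, abs_of_pos (by positivity),
            ← ENNReal.ofReal_mul (by positivity), ← ENNReal.ofReal_mul (by positivity),
            ← ENNReal.ofReal_mul (by positivity), ← rpow_sub_one_mul_inv_pow_mul_max_one_sub_sq_rpow ha]
          simp only [e]
          ring_nf
      _ = _ := by
          rw [lintegral_const_mul _ (by fun_prop),
            lintegral_Ioi_mul_max_sq_sub_sq_rpow_mul_exp (norm_nonneg z) he]
          ring
  · refine Function.support_subset_iff'.2 fun a (ha : ¬ 0 < a) => ?_
    simp [if_neg ha]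

theorem map_smul_prod_chiMeasure_tsallisMeasure {n k : ℕ} (he : ((n : ℝ) - k) / 2 - 1 ≠ 0)
    {ca cX : ℝ} (hca : 0 ≤ ca) (hcX : 0 ≤ cX) :
    ((chiMeasure n ca).prod (tsallisMeasure n k cX)).map (fun p => p.1 • p.2) =
      (ENNReal.ofReal (ca * cX) *
        ∫⁻ t in Ioi 0, ENNReal.ofReal ((2 * t) ^ (((n : ℝ) - k) / 2 - 1) * rexp (-t))) •
        volume.withDensity fun z => ENNReal.ofReal (rexp (-‖z‖ ^ 2 / 2)) := by
  have h_chi : Measurable fun t : ℝ =>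
      ENNReal.ofReal (ca * if 0 < t then t ^ ((n : ℝ) - 1) * rexp (-t ^ 2 / 2) else 0) :=
    ((Measurable.ite measurableSet_Ioi (by fun_prop) measurable_const).const_mul ca).ennreal_ofReal
  rw [chiMeasure, tsallisMeasure, map_smul_prod_withDensity _ h_chi (by fun_prop),
    ← withDensity_smul _ (by fun_prop), finrank_euclideanSpace_fin]
  simp_rw [lintegral_chi_mul_tsallis_density he hca hcX]
  rfl

theorem lintegral_exp_neg_sq_norm_div_two {V : Type*} [NormedAddCommGroup V]
    [InnerProductSpace ℝ V] [FiniteDimensional ℝ V] [MeasurableSpace V] [BorelSpace V] :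
    ∫⁻ v : V, ENNReal.ofReal (rexp (-‖v‖ ^ 2 / 2)) =
      ENNReal.ofReal ((2 * π) ^ (finrank ℝ V / 2 : ℝ)) := by
  have h_integral : ∫ v : V, rexp (-‖v‖ ^ 2 / 2) = (2 * π) ^ (finrank ℝ V / 2 : ℝ) := by
    simpa [neg_div, div_eq_inv_mul, div_inv_eq_mul, mul_comm π]
      using GaussianFourier.integral_rexp_neg_mul_sq_norm (V := V) (b := 1 / 2) (by norm_num)
  rw [← h_integral, ofReal_integral_eq_lintegral_ofReal
    (.of_integral_ne_zero (by rw [h_integral]; positivity))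
    (.of_forall fun _ => (exp_pos _).le)]

theorem stdGaussian_eq_smul (k : ℕ) :
    stdGaussian k = ENNReal.ofReal ((2 * π) ^ (-(k : ℝ) / 2)) •
      volume.withDensity fun z => ENNReal.ofReal (rexp (-‖z‖ ^ 2 / 2)) := by
  rw [stdGaussian, ← withDensity_smul _ (by fun_prop)]
  congr 1
  ext z
  rw [Pi.smul_apply, smul_eq_mul, ← ENNReal.ofReal_mul (by positivity)]

instance isProbabilityMeasure_stdGaussian (k : ℕ) : IsProbabilityMeasure (stdGaussian k) := by
  constructor
  rw [stdGaussian_eq_smul, Measure.smul_apply, withDensity_apply _ MeasurableSet.univ,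
    Measure.restrict_univ, lintegral_exp_neg_sq_norm_div_two, finrank_euclideanSpace_fin,
    smul_eq_mul, ← ENNReal.ofReal_mul (by positivity), ← rpow_add (by positivity), neg_div,
    neg_add_cancel, rpow_zero, ENNReal.ofReal_one]

theorem Measure.smul_eq_smul_of_isProbabilityMeasure {α : Type*} [MeasurableSpace α]
    {ν : Measure α} {c c' : ℝ≥0∞} (hc : IsProbabilityMeasure (c • ν))
    (hc' : IsProbabilityMeasure (c' • ν)) : c • ν = c' • ν := by
  have h₁ := hc.measure_univ
  have h₂ := hc'.measure_univ
  simp only [Measure.smul_apply, smul_eq_mul] at h₁ h₂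
  have h_ne_zero : ν univ ≠ 0 := fun h => by simp [h] at h₁
  have h_ne_top : ν univ ≠ ⊤ := fun h => by
    rcases eq_or_ne c 0 with rfl | hc0 <;> simp_all [ENNReal.mul_top]
  rw [(ENNReal.mul_left_inj h_ne_zero h_ne_top).1 (h₁.trans h₂.symm)]

/-- With Lean's `0 ^ 0 = 1`, the Tsallis density for `n = k + 2` is constant on all of `ℝ^k`. -/
theorem tsallisMeasure_add_two (k : ℕ) (c : ℝ) :
    tsallisMeasure (k + 2) k c = ENNReal.ofReal c • volume := by
  have h_exp : (((k + 2 : ℕ) : ℝ) - k) / 2 - 1 = 0 := by push_cast; ring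
  simp only [tsallisMeasure, h_exp, rpow_zero, mul_one, withDensity_const]

theorem not_isProbabilityMeasure_tsallisMeasure_add_two {k : ℕ} (hk : 1 ≤ k) {c : ℝ}
    (hc : 0 < c) : ¬ IsProbabilityMeasure (tsallisMeasure (k + 2) k c) := by
  have : Nonempty (Fin k) := ⟨⟨0, hk⟩⟩
  intro h
  simpa [tsallisMeasure_add_two, hc, ENNReal.mul_top] using h.measure_univ

theorem chi_mul_tsallis_is_gaussian_general (n k : ℕ) (hk : 1 ≤ k)
    (ca cX : ℝ) (hca : 0 < ca) (hcX : 0 < cX)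
    (ha : IsProbabilityMeasure (chiMeasure n ca))
    (hX : IsProbabilityMeasure (tsallisMeasure n k cX)) :
    ((chiMeasure n ca).prod (tsallisMeasure n k cX)).map
        (fun p : ℝ × EuclideanSpace ℝ (Fin k) => p.1 • p.2) =
      stdGaussian k := by
  obtain rfl | hn := eq_or_ne n (k + 2)
  · exact absurd hX (not_isProbabilityMeasure_tsallisMeasure_add_two hk hcX)
  have he : ((n : ℝ) - k) / 2 - 1 ≠ 0 := fun h =>
    hn (by exact_mod_cast (by linarith : (n : ℝ) = k + 2))
  have h_map : IsProbabilityMeasure (((chiMeasure n ca).prod (tsallisMeasure n k cX)).map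
      (fun p : ℝ × EuclideanSpace ℝ (Fin k) => p.1 • p.2)) :=
    Measure.isProbabilityMeasure_map (measurable_fst.smul measurable_snd).aemeasurable
  have h_gauss := isProbabilityMeasure_stdGaussian k
  rw [map_smul_prod_chiMeasure_tsallisMeasure he hca.le hcX.le] at h_map ⊢
  rw [stdGaussian_eq_smul] at h_gauss ⊢
  exact Measure.smul_eq_smul_of_isProbabilityMeasure h_map h_gauss

/-- Theorem 1 of the paper: if `X` is Tsallis distributed and `aₙ` is an independent chi
random variable with `n` degrees of freedom, then `aₙ • X` is a standard Gaussian vector. -/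
theorem chi_mul_tsallis_is_gaussian (n k : ℕ) (hk : 1 ≤ k) (hkn : k ≤ n)
    (ca cX : ℝ) (hca : 0 < ca) (hcX : 0 < cX)
    (ha : IsProbabilityMeasure (chiMeasure n ca))
    (hX : IsProbabilityMeasure (tsallisMeasure n k cX)) :
    ((chiMeasure n ca).prod (tsallisMeasure n k cX)).map
        (fun p : ℝ × EuclideanSpace ℝ (Fin k) => p.1 • p.2) =
      stdGaussian k :=
  chi_mul_tsallis_is_gaussian_general n k hk ca cX hca hcX ha hX
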